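/- arXiv:1705.09648 — 6 statements merged into one kernel-verified Lean document; each statement's English description precedes it below -/
import Mathlib

section
/- Let (M,d) be a homogeneous metric space that admits a metric dilation. Then (M,d) is proper and doubling. -/
/-- A metric space is doubling: there is `N` such that every ball of radius
`2r` can be covered by at most `N` balls of radius `r`. -/
def IsDoublingSpace (M : Type*) [MetricSpace M] : Prop :=
  ∃ N : ℕ, ∀ (x : M) (r : ℝ), 0 < r →
    ∃ t : Finset M, t.card ≤ N ∧ Metric.ball x (2 * r) ⊆ ⋃ y ∈ t, Metric.ball y r

/-!
Composing isometries with integer powers of the dilation gives, for every point `x` and every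
`n : ℤ`, a similarity of ratio `λ ^ n` sending a fixed base point to `x`. Blowing up a small
compact ball around the base point yields compact balls of every radius, so the space is proper.
A finite cover of the ball of radius `2λ` by unit balls, transported at the scale
`λ ^ n ≤ r < λ ^ (n + 1)`, covers any ball of radius `2r` by the same number of balls of
radius `r`.
-/

open Metric Set Dilation

lemma Dilation.nontrivial_of_ratio_ne_one {α β F : Type*} [PseudoEMetricSpace α]
    [PseudoEMetricSpace β] [FunLike F α β] [DilationClass F α β] {f : F} (hf : ratio f ≠ 1) :
    Nontrivial α := by
  by_contra h
  rw [not_nontrivial_iff_subsingleton] at h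
  exact hf (ratio_of_subsingleton f)

lemma DilationEquiv.image_closedBall {X Y : Type*} [PseudoMetricSpace X] [PseudoMetricSpace Y]
    (e : X ≃ᵈ Y) (x : X) (r : ℝ) : e '' closedBall x r = closedBall (e x) (ratio e * r) := by
  refine (mapsTo_closedBall e x r).image_subset.antisymm fun y hy => ⟨e.symm y, ?_, by simp⟩
  have := mapsTo_closedBall e.symm (e x) (ratio e * r) hy
  rwa [symm_apply_apply, ratio_symm, NNReal.coe_inv,
    inv_mul_cancel_left₀ (NNReal.coe_ne_zero.2 (ratio_ne_zero e))] at this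

lemma Equiv.exists_dilationEquiv_ratio_eq {X : Type*} [MetricSpace X] [Nontrivial X] (δ : X ≃ X)
    {c : ℝ} (hc : 0 < c) (hδ : ∀ x y, dist (δ x) (δ y) = c * dist x y) :
    ∃ e : X ≃ᵈ X, (ratio e : ℝ) = c := by
  have hδ' : ∀ x y, dist (δ x) (δ y) = c.toNNReal * dist x y := by
    simpa [Real.coe_toNNReal c hc.le] using hδ
  let e : X ≃ᵈ X :=
    { δ with edist_eq' := (mkOfDistEq δ ⟨c.toNNReal, by simpa using hc, hδ'⟩).edist_eq' }
  obtain ⟨x, y, hxy⟩ := exists_pair_ne X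
  refine ⟨e, ?_⟩
  rw [← ratio_unique_of_dist_ne_zero (f := e) (dist_ne_zero.2 hxy) (hδ' x y),
    Real.coe_toNNReal c hc.le]

lemma exists_dilationEquiv_apply_eq_ratio_zpow {X : Type*} [PseudoMetricSpace X]
    (hhom : ∀ x y : X, ∃ f : X ≃ᵢ X, f x = y) (e : X ≃ᵈ X) (x y : X) (n : ℤ) :
    ∃ g : X ≃ᵈ X, g x = y ∧ ratio g = ratio e ^ n := by
  obtain ⟨f, hf⟩ := hhom ((e ^ n) x) y
  refine ⟨f.toDilationEquiv * e ^ n, hf, ?_⟩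
  rw [DilationEquiv.mul_def, DilationEquiv.ratio_trans, IsometryEquiv.toDilationEquiv_ratio,
    mul_one, DilationEquiv.ratio_zpow]

theorem ProperSpace.of_dilationEquiv {X : Type*} [PseudoMetricSpace X]
    [WeaklyLocallyCompactSpace X] (hhom : ∀ x y : X, ∃ f : X ≃ᵢ X, f x = y) (e : X ≃ᵈ X)
    (he : 1 < ratio e) : ProperSpace X := by
  have := nontrivial_of_ratio_ne_one he.ne'
  obtain ⟨x₀⟩ : Nonempty X := inferInstance
  obtain ⟨ρ, hρ, hcompact⟩ := exists_isCompact_closedBall x₀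
  refine ⟨fun x R => ?_⟩
  obtain ⟨n, hn⟩ := pow_unbounded_of_one_lt (R / ρ) (show (1 : ℝ) < ratio e from he)
  obtain ⟨g, rfl, hg⟩ := exists_dilationEquiv_apply_eq_ratio_zpow hhom e x₀ x n
  have hR : R ≤ ratio g * ρ := by
    rw [hg, zpow_natCast, NNReal.coe_pow]
    exact ((div_lt_iff₀ hρ).1 hn).le
  refine ((hcompact.image (lipschitz g).continuous).of_isClosed_subset isClosed_closedBall ?_)
  rw [DilationEquiv.image_closedBall]
  exact closedBall_subset_closedBall hR

theorem IsDoublingSpace.of_dilationEquiv {X : Type*} [MetricSpace X] [ProperSpace X]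
    (hhom : ∀ x y : X, ∃ f : X ≃ᵢ X, f x = y) (e : X ≃ᵈ X) (he : 1 < ratio e) :
    IsDoublingSpace X := by
  classical
  have := nontrivial_of_ratio_ne_one he.ne'
  obtain ⟨x₀⟩ : Nonempty X := inferInstance
  obtain ⟨T, -, hT⟩ := (isCompact_closedBall x₀ (2 * ratio e)).elim_nhds_subcover
    (fun y => ball y 1) fun y _ => ball_mem_nhds y one_pos
  refine ⟨T.card, fun x r hr => ?_⟩
  obtain ⟨n, hrn, hrn'⟩ := exists_mem_Ico_zpow hr (show (1 : ℝ) < ratio e from he)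
  obtain ⟨g, rfl, hgn⟩ := exists_dilationEquiv_apply_eq_ratio_zpow hhom e x₀ x n
  have hg : (ratio g : ℝ) = ratio e ^ n := by rw [hgn, NNReal.coe_zpow]
  refine ⟨T.image g, Finset.card_image_le, ?_⟩
  calc ball (g x₀) (2 * r) ⊆ closedBall (g x₀) (ratio g * (2 * ratio e)) := by
        refine ball_subset_closedBall.trans (closedBall_subset_closedBall ?_)
        rw [zpow_add_one₀ (NNReal.coe_ne_zero.2 (ratio_ne_zero e))] at hrn'
        rw [hg]
        linarith
    _ = g '' closedBall x₀ (2 * ratio e) := (DilationEquiv.image_closedBall g x₀ _).symm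
    _ ⊆ g '' ⋃ y ∈ T, ball y 1 := image_mono hT
    _ ⊆ ⋃ y ∈ T.image g, ball y r := by
        rw [image_iUnion₂, Finset.set_biUnion_finset_image]
        refine iUnion₂_mono fun y _ => (mapsTo_ball g y 1).image_subset.trans ?_
        exact ball_subset_ball (by rw [hg, mul_one]; exact hrn)

theorem IsDoublingSpace.of_subsingleton {X : Type*} [MetricSpace X] [Subsingleton X] :
    IsDoublingSpace X :=
  ⟨1, fun x r hr => ⟨{x}, by simp, fun y _ => by simp [Subsingleton.elim y x, hr]⟩⟩

theorem statement6_general (M : Type*) [MetricSpace M] [LocallyCompactSpace M]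
    (hhom : ∀ x y : M, ∃ f : M ≃ᵢ M, f x = y)
    (δ : M ≃ M) (lam : ℝ) (hlam : 1 < lam)
    (hδ : ∀ x y : M, dist (δ x) (δ y) = lam * dist x y) :
    ProperSpace M ∧ IsDoublingSpace M := by
  rcases subsingleton_or_nontrivial M with _ | _
  · exact ⟨inferInstance, .of_subsingleton⟩
  obtain ⟨e, hratio⟩ := δ.exists_dilationEquiv_ratio_eq (by linarith) hδ
  have he : 1 < ratio e := by rw [← NNReal.coe_lt_coe, hratio]; exact hlam
  have : ProperSpace M := .of_dilationEquiv hhom e he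
  exact ⟨this, .of_dilationEquiv hhom e he⟩

/-- a homogeneous metric space admitting a metric dilation is
proper and doubling. -/
theorem statement6 (M : Type*) [MetricSpace M] [ConnectedSpace M] [LocallyCompactSpace M]
    (hhom : ∀ x y : M, ∃ f : M ≃ᵢ M, f x = y)
    (δ : M ≃ M) (lam : ℝ) (hlam : 1 < lam)
    (hδ : ∀ x y : M, dist (δ x) (δ y) = lam * dist x y) :
    ProperSpace M ∧ IsDoublingSpace M :=
  statement6_general M hhom δ lam hlam hδ
end

section
/- Let (M,d) be a metric space (not necessarily connected or locally compact). Then the group Iso(M,d) of surjective distance-preserving self-maps of M, endowed with the topology of pointwise convergence and with composition as group operation, is a topological group, and the evaluation map (f,p) ↦ f(p) from Iso(M,d) × M to M is jointly continuous. -/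
/-! Isometries form a uniformly equicontinuous family, so pointwise convergence `fᵢ → f` together
with `pᵢ → p` gives `fᵢ pᵢ → f p`; this is joint continuity of evaluation, and continuity of
composition follows from it. For inversion, applying the isometry `f` turns
`d(f⁻¹ x, f₀⁻¹ x)` into `d(x, f (f₀⁻¹ x))`, which tends to `d(x, f₀ (f₀⁻¹ x)) = 0` as `f → f₀`
pointwise. -/

open Filter Function Topology

theorem EquicontinuousAt.continuousAt_uncurry {ι α β : Type*} [TopologicalSpace ι]
    [TopologicalSpace α] [UniformSpace β] {F : ι → α → β} {i₀ : ι} {a₀ : α}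
    (hF : EquicontinuousAt F a₀) (h : ContinuousAt (fun i => F i a₀) i₀) :
    ContinuousAt (uncurry F) (i₀, a₀) := by
  rw [ContinuousAt, Uniform.tendsto_nhds_right]
  refine fun U hU => mem_map.mpr ?_
  obtain ⟨V, hV, hVU⟩ := comp_mem_uniformity_sets hU
  have hi : ∀ᶠ i in 𝓝 i₀, (F i₀ a₀, F i a₀) ∈ V := Uniform.tendsto_nhds_right.mp h hV
  filter_upwards [hi.prod_inl_nhds a₀, (hF V hV).prod_inr_nhds i₀] with q hq₁ hq₂
  exact hVU ⟨_, hq₁, hq₂ q.1⟩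

theorem Isometry.continuous_uncurry {X α β : Type*} [TopologicalSpace X]
    [PseudoEMetricSpace α] [PseudoEMetricSpace β] {F : X → α → β}
    (hF : ∀ x, Isometry (F x)) (h : ∀ a, Continuous fun x => F x a) :
    Continuous (uncurry F) := by
  have hequi : UniformEquicontinuous F :=
    LipschitzWith.uniformEquicontinuous F 1 fun x => (hF x).lipschitz
  exact continuous_iff_continuousAt.mpr fun q =>
    (hequi.equicontinuous q.2).continuousAt_uncurry (h q.2).continuousAt

theorem IsometryEquiv.continuous_symm_apply {X α β : Type*} [TopologicalSpace X]
    [PseudoEMetricSpace α] [PseudoEMetricSpace β] {F : X → α ≃ᵢ β}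
    (h : ∀ a, Continuous fun x => F x a) (b : β) :
    Continuous fun x => (F x).symm b := by
  refine continuous_iff_continuousAt.mpr fun x₀ => ?_
  have hdist : ∀ x, edist ((F x).symm b) ((F x₀).symm b) = edist (F x ((F x₀).symm b)) b := by
    intro x
    rw [← (F x).edist_eq, apply_symm_apply, edist_comm]
  have hlim : Tendsto (fun x => F x ((F x₀).symm b)) (𝓝 x₀) (𝓝 b) := by
    simpa only [apply_symm_apply] using (h ((F x₀).symm b)).tendsto x₀
  rw [ContinuousAt, tendsto_iff_edist_tendsto_0]
  simpa only [hdist] using tendsto_iff_edist_tendsto_0.mp hlim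

namespace IsometryEquiv

variable {α β : Type*} [PseudoEMetricSpace α] [PseudoEMetricSpace β]

abbrev pointwiseTopology : TopologicalSpace (α ≃ᵢ β) :=
  TopologicalSpace.induced (fun f : α ≃ᵢ β => (⇑f : α → β)) Pi.topologicalSpace

attribute [local instance] pointwiseTopology

theorem continuous_pointwise_iff {X : Type*} [TopologicalSpace X] {g : X → α ≃ᵢ β} :
    Continuous g ↔ ∀ a, Continuous fun x => g x a :=
  continuous_induced_rng.trans continuous_pi_iff

theorem continuous_apply_pointwise (a : α) : Continuous fun f : α ≃ᵢ β => f a :=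
  continuous_pointwise_iff.mp continuous_id a

theorem continuous_eval_pointwise : Continuous fun p : (α ≃ᵢ β) × α => p.1 p.2 :=
  Isometry.continuous_uncurry (F := fun f : α ≃ᵢ β => ⇑f) (fun f => f.isometry)
    continuous_apply_pointwise

theorem isTopologicalGroup_pointwise : IsTopologicalGroup (α ≃ᵢ α) where
  continuous_mul := continuous_pointwise_iff.mpr fun a =>
    continuous_eval_pointwise.comp
      (continuous_fst.prodMk ((continuous_apply_pointwise a).comp continuous_snd))
  continuous_inv := continuous_pointwise_iff.mpr
    (continuous_symm_apply (F := id) continuous_apply_pointwise)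

end IsometryEquiv

/-- for any metric space `M` (not necessarily connected or
locally compact), the group of isometries of `M` (surjective distance
preserving self-maps, i.e. self isometry-equivalences), with the topology of
pointwise convergence and composition as group law, is a topological group,
and the evaluation map is jointly continuous. -/
theorem statement7 (M : Type*) [MetricSpace M] :
    letI : TopologicalSpace (M ≃ᵢ M) :=
      TopologicalSpace.induced (fun f : M ≃ᵢ M => (⇑f : M → M)) Pi.topologicalSpace
    IsTopologicalGroup (M ≃ᵢ M) ∧
      Continuous fun p : (M ≃ᵢ M) × M => p.1 p.2 :=
  ⟨IsometryEquiv.isTopologicalGroup_pointwise, IsometryEquiv.continuous_eval_pointwise⟩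
end

section
/- Let (M,d) be a homogeneous metric space. Then every distance-preserving map from M to M is surjective. Consequently, Iso(M,d) is closed in the space of all self-maps of M equipped with the topology of pointwise convergence. -/
open Metric Set Function

/-- A distance-preserving self-map of a compact set into itself hits every point of the set. -/
lemma aux_compact_surj {M : Type*} [MetricSpace M] {h : M → M} (hIso : Isometry h)
    {K : Set M} (hK : IsCompact K) (hmaps : ∀ x ∈ K, h x ∈ K) :
    K ⊆ h '' K := by
  intro q hq
  by_contra hqn
  have hit : ∀ m : ℕ, Isometry (h^[m]) := by
    intro m
    induction m with
    | zero => simpa using isometry_id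
    | succ m ih => rw [Function.iterate_succ]; exact ih.comp hIso
  have horb : ∀ n, h^[n] q ∈ K := by
    intro n
    induction n with
    | zero => simpa
    | succ n ih => rw [Function.iterate_succ_apply']; exact hmaps _ ih
  have himg : ∀ n : ℕ, 0 < n → h^[n] q ∈ h '' K := by
    intro n hn
    obtain ⟨m, rfl⟩ : ∃ m, n = m + 1 := ⟨n - 1, (Nat.succ_pred_eq_of_pos hn).symm⟩
    rw [Function.iterate_succ_apply']
    exact ⟨_, horb m, rfl⟩
  have himgK : IsCompact (h '' K) := hK.image hIso.continuous
  obtain ⟨ε, hε, hsep⟩ : ∃ ε > 0, ∀ y ∈ h '' K, ε ≤ dist q y := by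
    have hqc : q ∉ closure (h '' K) := by rwa [himgK.isClosed.closure_eq]
    rw [Metric.mem_closure_iff] at hqc
    push_neg at hqc
    obtain ⟨ε, hε, hb⟩ := hqc
    exact ⟨ε, hε, fun y hy => hb y hy⟩
  have hsep2 : ∀ m n : ℕ, m < n → ε ≤ dist (h^[m] q) (h^[n] q) := by
    intro m n hmn
    have hn : n = m + (n - m) := (Nat.add_sub_cancel' hmn.le).symm
    have : h^[n] q = h^[m] (h^[n - m] q) := by
      conv_lhs => rw [hn]
      exact Function.iterate_add_apply h m (n - m) q
    rw [this]
    have hd : dist (h^[m] q) (h^[m] (h^[n - m] q)) = dist q (h^[n - m] q) :=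
      (hit m).dist_eq _ _
    rw [hd]
    exact hsep _ (himg _ (Nat.sub_pos_of_lt hmn))
  obtain ⟨a, -, φ, hφ, hconv⟩ := hK.tendsto_subseq horb
  have hdist : Filter.Tendsto (fun n => dist (h^[φ n] q) (h^[φ (n + 1)] q))
      Filter.atTop (nhds (dist a a)) :=
    Filter.Tendsto.dist hconv (hconv.comp (Filter.tendsto_add_atTop_nat 1))
  rw [dist_self] at hdist
  have hev := hdist.eventually (eventually_lt_nhds hε)
  obtain ⟨n, hn⟩ := hev.exists
  exact absurd (hsep2 _ _ (hφ (Nat.lt_succ_self n))) (not_le.mpr hn)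

/-- On a connected space with uniformly compact closed balls, an isometric self-map
with a fixed point is surjective. -/
lemma aux_fix_surj {M : Type*} [MetricSpace M] [ConnectedSpace M]
    {ρ : ℝ} (hρ : 0 < ρ) (hball : ∀ x : M, IsCompact (Metric.closedBall x ρ))
    {h : M → M} (hIso : Isometry h) {p : M} (hp : h p = p) :
    Function.Surjective h := by
  set δ := ρ / 2 with hδ
  have hδ0 : 0 < δ := by positivity
  let C : ℕ → Set M := fun n => Nat.rec {p} (fun _ s => Metric.cthickening δ s) n
  have hCs : ∀ n, C (n + 1) = Metric.cthickening δ (C n) := fun n => rfl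
  have hne : ∀ n, (C n).Nonempty := by
    intro n
    induction n with
    | zero => exact ⟨p, rfl⟩
    | succ n ih =>
      obtain ⟨w, hw⟩ := ih
      exact ⟨w, self_subset_cthickening _ hw⟩
  have hcomp : ∀ n, IsCompact (C n) := by
    intro n
    induction n with
    | zero => exact isCompact_singleton
    | succ n ih =>
      obtain ⟨t, htf, htc⟩ := (Metric.totallyBounded_iff.mp ih.totallyBounded) δ hδ0
      have hsub : C (n + 1) ⊆ ⋃ y ∈ t, Metric.closedBall y ρ := by
        intro z hz
        rw [hCs n, Metric.mem_cthickening_iff] at hz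
        obtain ⟨w, hw, hwd⟩ := ih.exists_infEdist_eq_edist (hne n) z
        rw [hwd, edist_dist] at hz
        have hzw : dist z w ≤ δ := (ENNReal.ofReal_le_ofReal_iff hδ0.le).mp hz
        obtain ⟨y, hy, hwy⟩ := Set.mem_iUnion₂.mp (htc hw)
        refine Set.mem_iUnion₂.mpr ⟨y, hy, ?_⟩
        rw [Metric.mem_closedBall]
        calc dist z y ≤ dist z w + dist w y := dist_triangle _ _ _
          _ ≤ δ + δ := add_le_add hzw (le_of_lt (Metric.mem_ball.mp hwy))
          _ = ρ := by rw [hδ]; ring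
      exact IsCompact.of_isClosed_subset
        (htf.isCompact_biUnion fun y _ => hball y) Metric.isClosed_cthickening hsub
  have hinv : ∀ n, ∀ x ∈ C n, h x ∈ C n := by
    intro n
    induction n with
    | zero =>
      intro x hx
      have hC0 : C 0 = {p} := rfl
      rw [hC0, Set.mem_singleton_iff] at hx
      rw [hC0, hx, hp]
      exact Set.mem_singleton _
    | succ n ih =>
      intro x hx
      rw [hCs n, Metric.mem_cthickening_iff] at hx
      obtain ⟨w, hw, hwd⟩ := (hcomp n).exists_infEdist_eq_edist (hne n) x
      rw [hwd] at hx
      rw [hCs n]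
      refine Metric.mem_cthickening_of_edist_le (h x) (h w) δ _ (ih w hw) ?_
      rw [hIso.edist_eq]
      exact hx
  have hSuniv : (⋃ n, C n) = Set.univ := by
    have hopen : IsOpen (⋃ n, C n) := by
      rw [Metric.isOpen_iff]
      rintro x hx
      obtain ⟨n, hn⟩ := Set.mem_iUnion.mp hx
      refine ⟨δ, hδ0, fun w hw => Set.mem_iUnion.mpr ⟨n + 1, ?_⟩⟩
      rw [hCs n]
      exact Metric.mem_cthickening_of_dist_le w x δ _ hn (le_of_lt (Metric.mem_ball.mp hw))
    have hclosed : IsClosed (⋃ n, C n) := by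
      refine isClosed_of_closure_subset fun x hx => ?_
      rw [Metric.mem_closure_iff] at hx
      obtain ⟨w, hw, hwd⟩ := hx δ hδ0
      obtain ⟨n, hn⟩ := Set.mem_iUnion.mp hw
      refine Set.mem_iUnion.mpr ⟨n + 1, ?_⟩
      rw [hCs n]
      exact Metric.mem_cthickening_of_dist_le x w δ _ hn hwd.le
    exact IsClopen.eq_univ ⟨hclosed, hopen⟩ ⟨p, Set.mem_iUnion.mpr ⟨0, rfl⟩⟩
  intro y
  have hy : y ∈ ⋃ n, C n := hSuniv ▸ Set.mem_univ y
  obtain ⟨n, hn⟩ := Set.mem_iUnion.mp hy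
  obtain ⟨x, -, hx⟩ := aux_compact_surj hIso (hcomp n) (hinv n) hn
  exact ⟨x, hx⟩

/-- on a homogeneous metric space, every distance-preserving
self-map is surjective; consequently the set of isometries (surjective
distance-preserving self-maps) is closed in the space of all self-maps with
the topology of pointwise convergence. -/
theorem statement8 (M : Type*) [MetricSpace M] [ConnectedSpace M] [LocallyCompactSpace M]
    (hhom : ∀ x y : M, ∃ f : M ≃ᵢ M, f x = y) :
    (∀ f : M → M, Isometry f → Function.Surjective f) ∧
    IsClosed {f : M → M | Isometry f ∧ Function.Surjective f} := by
  obtain ⟨x₀⟩ : Nonempty M := inferInstance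
  obtain ⟨r, hr, hcomp⟩ := Metric.exists_isCompact_closedBall x₀
  have hball : ∀ x : M, IsCompact (Metric.closedBall x r) := by
    intro x
    obtain ⟨g, hg⟩ := hhom x₀ x
    have := hcomp.image g.continuous
    rwa [g.image_closedBall, hg] at this
  have hsurj : ∀ f : M → M, Isometry f → Function.Surjective f := by
    intro f hf
    obtain ⟨g, hg⟩ := hhom (f x₀) x₀
    have hgf : Isometry (g ∘ f) := g.isometry.comp hf
    have hfix : (g ∘ f) x₀ = x₀ := hg
    have hs := aux_fix_surj hr hball hgf hfix
    intro y
    obtain ⟨x, hx⟩ := hs (g y)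
    exact ⟨x, g.injective hx⟩
  refine ⟨hsurj, ?_⟩
  have heq : {f : M → M | Isometry f ∧ Function.Surjective f} =
      ⋂ (x : M) (y : M), {f : M → M | dist (f x) (f y) = dist x y} := by
    ext f
    simp only [Set.mem_setOf_eq, Set.mem_iInter]
    constructor
    · rintro ⟨hf, -⟩ x y
      exact hf.dist_eq x y
    · intro hd
      have hf : Isometry f := Isometry.of_dist_eq hd
      exact ⟨hf, hsurj f hf⟩
  rw [heq]
  exact isClosed_iInter fun x => isClosed_iInter fun y =>
    isClosed_eq ((continuous_apply x).dist (continuous_apply y)) continuous_const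
end

section
/- Let M be a connected locally compact topological group with an admissible left-invariant distance function d, and let K be a compact normal subgroup of M. Then there is a distance function d' on the quotient group M/K inducing the quotient topology such that the quotient map x ↦ xK from (M,d) to (M/K, d') is 1-Lipschitz and a (1, diam(K))-quasi-isometry, where diam(K) is the diameter of K with respect to d. -/
/-!
The distance on `M ⧸ K` is the Hausdorff distance between cosets. If `m ∈ x K`, left
multiplication by `m x⁻¹ ∈ K` is an isometry sending `x` to `m` and, by normality, `y` into
`y K`; so `x K` and `y K` are at Hausdorff distance at most `d(x, y)`. Every point of `y K` lies
within `diam K` of `y`, which gives the lower bound. The same argument shows that the balls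
around `x K` are the images of the balls around `x`, and the quotient map is open, so the
distance induces the quotient topology.
-/

/-- `f` is an `(L, C)`-quasi-isometry between the distances `dX` and `dY`. -/
def IsQuasiIsometry {X Y : Type*} (L C : ℝ) (dX : X → X → ℝ) (dY : Y → Y → ℝ)
    (f : X → Y) : Prop :=
  (∀ x y : X, L⁻¹ * dX x y - C ≤ dY (f x) (f y) ∧ dY (f x) (f y) ≤ L * dX x y + C) ∧
  ∀ z : Y, ∃ x : X, dY (f x) z ≤ C

/-- `d` is a distance function on `X` inducing the given topology. -/
def IsCompatibleDist (X : Type*) [TopologicalSpace X] (d : X → X → ℝ) : Prop :=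
  (∀ x y : X, d x y = 0 ↔ x = y) ∧ (∀ x y : X, d x y = d y x) ∧
  (∀ x y z : X, d x z ≤ d x y + d y z) ∧
  ∀ (x : X) (s : Set X), s ∈ nhds x ↔ ∃ ε > 0, {y : X | d x y < ε} ⊆ s

open Metric Pointwise QuotientGroup

section LeftCosets

variable {M : Type*} [PseudoMetricSpace M] [Group M] [IsIsometricSMul M M] {K : Subgroup M}

theorem hausdorffEDist_smul_subgroup_ne_top (hK : IsCompact (K : Set M)) (x y : M) :
    hausdorffEDist (x • (K : Set M)) (y • (K : Set M)) ≠ ⊤ :=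
  hausdorffEDist_ne_top_of_nonempty_of_bounded ((OneMemClass.coe_nonempty K).smul_set)
    ((OneMemClass.coe_nonempty K).smul_set) (hK.smul x).isBounded (hK.smul y).isBounded

theorem infDist_le_hausdorffDist_smul_subgroup (hK : IsCompact (K : Set M)) (x y : M) :
    infDist x (y • (K : Set M)) ≤ hausdorffDist (x • (K : Set M)) (y • (K : Set M)) :=
  infDist_le_hausdorffDist_of_mem (mem_own_leftCoset K.toSubmonoid x)
    (hausdorffEDist_smul_subgroup_ne_top hK x y)

theorem exists_mem_smul_subgroup_dist_le [hKn : K.Normal] {x y m : M}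
    (hm : m ∈ x • (K : Set M)) : ∃ n ∈ y • (K : Set M), dist m n ≤ dist x y := by
  rw [mem_leftCoset_iff] at hm
  have hmx : m * x⁻¹ ∈ K := by simpa [mul_assoc] using hKn.conj_mem _ hm x
  refine ⟨m * x⁻¹ * y, ?_, ?_⟩
  · rw [mem_leftCoset_iff]
    simpa [mul_assoc] using hKn.conj_mem _ hmx y⁻¹
  · simpa using (dist_mul_left (m * x⁻¹) x y).le

theorem hausdorffDist_smul_subgroup_le_dist [K.Normal] (x y : M) :
    hausdorffDist (x • (K : Set M)) (y • (K : Set M)) ≤ dist x y :=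
  hausdorffDist_le_of_mem_dist dist_nonneg (fun _ hm => exists_mem_smul_subgroup_dist_le hm)
    fun _ hm => by simpa only [dist_comm x y] using exists_mem_smul_subgroup_dist_le hm

theorem dist_le_diam_of_mem_smul_subgroup (hK : Bornology.IsBounded (K : Set M)) {y n : M}
    (hn : n ∈ y • (K : Set M)) : dist n y ≤ diam (K : Set M) := by
  rw [mem_leftCoset_iff] at hn
  calc dist n y = dist (y⁻¹ * n) 1 := by simpa using (dist_mul_left y⁻¹ n y).symm
    _ ≤ diam (K : Set M) := dist_le_diam_of_mem hK hn K.one_mem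

theorem dist_sub_diam_le_hausdorffDist_smul_subgroup (hK : IsCompact (K : Set M)) (x y : M) :
    dist x y - diam (K : Set M) ≤ hausdorffDist (x • (K : Set M)) (y • (K : Set M)) := by
  refine le_trans ?_ (infDist_le_hausdorffDist_smul_subgroup hK x y)
  refine le_of_not_gt fun hlt => ?_
  obtain ⟨n, hn, hxn⟩ := (infDist_lt_iff ((OneMemClass.coe_nonempty K).smul_set)).1 hlt
  linarith [dist_triangle x n y, dist_le_diam_of_mem_smul_subgroup hK.isBounded hn]

end LeftCosets

section CosetDist

variable {M : Type*} [PseudoMetricSpace M] [Group M] {K : Subgroup M}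

variable (K) in
noncomputable def cosetDist (a b : M ⧸ K) : ℝ :=
  hausdorffDist {x : M | (x : M ⧸ K) = a} {x : M | (x : M ⧸ K) = b}

theorem cosetDist_mk (x y : M) :
    cosetDist K x y = hausdorffDist (x • (K : Set M)) (y • (K : Set M)) := by
  simp only [cosetDist, eq_class_eq_leftCoset]

theorem cosetDist_comm (a b : M ⧸ K) : cosetDist K a b = cosetDist K b a :=
  hausdorffDist_comm

variable [IsIsometricSMul M M]

theorem cosetDist_triangle (hK : IsCompact (K : Set M)) (a b c : M ⧸ K) :
    cosetDist K a c ≤ cosetDist K a b + cosetDist K b c := by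
  induction a using QuotientGroup.induction_on
  induction b using QuotientGroup.induction_on
  induction c using QuotientGroup.induction_on
  simp only [cosetDist_mk]
  exact hausdorffDist_triangle (hausdorffEDist_smul_subgroup_ne_top hK _ _)

theorem cosetDist_mk_le_dist [K.Normal] (x y : M) : cosetDist K x y ≤ dist x y := by
  simpa only [cosetDist_mk] using hausdorffDist_smul_subgroup_le_dist x y

theorem dist_sub_diam_le_cosetDist_mk (hK : IsCompact (K : Set M)) (x y : M) :
    dist x y - diam (K : Set M) ≤ cosetDist K x y := by
  simpa only [cosetDist_mk] using dist_sub_diam_le_hausdorffDist_smul_subgroup hK x y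

theorem isQuasiIsometry_mk_cosetDist [K.Normal] (hK : IsCompact (K : Set M)) :
    IsQuasiIsometry 1 (diam (K : Set M)) dist (cosetDist K) ((↑) : M → M ⧸ K) := by
  refine ⟨fun x y => ⟨?_, ?_⟩, fun z => ?_⟩
  · simpa using dist_sub_diam_le_cosetDist_mk hK x y
  · linarith [cosetDist_mk_le_dist (K := K) x y, diam_nonneg (s := (K : Set M))]
  · induction z using QuotientGroup.induction_on with
    | H x => exact ⟨x, by simp [cosetDist_mk, diam_nonneg]⟩

theorem setOf_cosetDist_lt_eq_image_ball [K.Normal] (hK : IsCompact (K : Set M)) (x : M)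
    (ε : ℝ) : {z : M ⧸ K | cosetDist K x z < ε} = (↑) '' ball x ε := by
  ext z
  induction z using QuotientGroup.induction_on with
  | H y =>
    refine ⟨fun hz => ?_, ?_⟩
    · rw [Set.mem_ofPred_eq, cosetDist_mk] at hz
      obtain ⟨n, hn, hxn⟩ := (infDist_lt_iff (OneMemClass.coe_nonempty K).smul_set).1 <|
        (infDist_le_hausdorffDist_smul_subgroup hK x y).trans_lt hz
      refine ⟨n, mem_ball'.2 hxn, ?_⟩
      rwa [← eq_class_eq_leftCoset] at hn
    · rintro ⟨n, hn, hny⟩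
      rw [Set.mem_ofPred_eq, ← hny]
      exact (cosetDist_mk_le_dist x n).trans_lt (mem_ball'.1 hn)

end CosetDist

section Compatible

variable {M : Type*} [MetricSpace M] [Group M] [IsIsometricSMul M M] {K : Subgroup M}

theorem cosetDist_eq_zero_iff (hK : IsCompact (K : Set M)) (a b : M ⧸ K) :
    cosetDist K a b = 0 ↔ a = b := by
  induction a using QuotientGroup.induction_on with | H x => ?_
  induction b using QuotientGroup.induction_on with | H y => ?_
  rw [cosetDist_mk, (hK.smul x).isClosed.hausdorffDist_zero_iff_eq
    (hK.smul y).isClosed (hausdorffEDist_smul_subgroup_ne_top hK x y),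
    ← eq_class_eq_leftCoset, ← eq_class_eq_leftCoset]
  refine ⟨fun h => ?_, fun h => h ▸ rfl⟩
  have hx : x ∈ {z : M | (z : M ⧸ K) = x} := rfl
  rwa [h] at hx

theorem mem_nhds_mk_iff_cosetDist [SeparatelyContinuousMul M] [K.Normal]
    (hK : IsCompact (K : Set M)) (x : M) (s : Set (M ⧸ K)) :
    s ∈ nhds (x : M ⧸ K) ↔ ∃ ε > 0, {z | cosetDist K x z < ε} ⊆ s := by
  simp only [← isOpenQuotientMap_mk.map_nhds_eq x, Filter.mem_map, Metric.mem_nhds_iff,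
    setOf_cosetDist_lt_eq_image_ball hK, Set.image_subset_iff]

theorem isCompatibleDist_cosetDist [SeparatelyContinuousMul M] [K.Normal]
    (hK : IsCompact (K : Set M)) : IsCompatibleDist (M ⧸ K) (cosetDist K) := by
  refine ⟨cosetDist_eq_zero_iff hK, cosetDist_comm, cosetDist_triangle hK, fun a s => ?_⟩
  induction a using QuotientGroup.induction_on with
  | H x => exact mem_nhds_mk_iff_cosetDist hK x s

end Compatible

theorem statement16_general (M : Type*) [MetricSpace M] [Group M] [IsTopologicalGroup M]
    (hleft : ∀ g x y : M, dist (g * x) (g * y) = dist x y)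
    (K : Subgroup M) (hKn : K.Normal) (hKc : IsCompact (K : Set M)) :
    ∃ d' : (M ⧸ K) → (M ⧸ K) → ℝ,
      IsCompatibleDist (M ⧸ K) d' ∧
      (∀ x y : M, d' (QuotientGroup.mk x) (QuotientGroup.mk y) ≤ dist x y) ∧
      IsQuasiIsometry 1 (Metric.diam (K : Set M)) (fun x y : M => dist x y) d'
        (QuotientGroup.mk : M → M ⧸ K) := by
  have : IsIsometricSMul M M := ⟨fun g => Isometry.of_dist_eq (hleft g)⟩
  exact ⟨cosetDist K, isCompatibleDist_cosetDist hKc, cosetDist_mk_le_dist,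
    isQuasiIsometry_mk_cosetDist hKc⟩

/-- a connected locally compact metric group modulo a compact
normal subgroup `K` carries a distance inducing the quotient topology for
which the quotient homomorphism is 1-Lipschitz and a
`(1, diam K)`-quasi-isometry. -/
theorem statement16 (M : Type*) [MetricSpace M] [Group M] [IsTopologicalGroup M]
    [ConnectedSpace M] [LocallyCompactSpace M]
    (hleft : ∀ g x y : M, dist (g * x) (g * y) = dist x y)
    (K : Subgroup M) (hKn : K.Normal) (hKc : IsCompact (K : Set M)) :
    ∃ d' : (M ⧸ K) → (M ⧸ K) → ℝ,
      IsCompatibleDist (M ⧸ K) d' ∧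
      (∀ x y : M, d' (QuotientGroup.mk x) (QuotientGroup.mk y) ≤ dist x y) ∧
      IsQuasiIsometry 1 (Metric.diam (K : Set M)) (fun x y : M => dist x y) d'
        (QuotientGroup.mk : M → M ⧸ K) :=
  statement16_general M hleft K hKn hKc
end

section
/- Let (M,d) be a locally compact metric space, let A be a group of homeomorphisms of M that is compact in the topology of uniform convergence on compact sets and that normalises a group J of isometries of (M,d). Define d_A(x,y) := max{ d(a(x), a(y)) : a ∈ A } for x, y ∈ M. Then d_A is a distance function on M inducing the same topology as d, and d_A is invariant under every map of the form g∘a with g ∈ J and a ∈ A. Moreover, if every map in A is an (L,C)-quasi-isometry of (M,d), then the identity map on M is an (L,C)-quasi-isometry from (M,d) to (M,d_A). -/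
/-- The group of self-homeomorphisms of a topological space, under
composition. -/
instance homeoGroup {M : Type*} [TopologicalSpace M] : Group (M ≃ₜ M) where
  one := Homeomorph.refl M
  mul a b := b.trans a
  inv := Homeomorph.symm
  mul_assoc _ _ _ := rfl
  one_mul _ := Homeomorph.ext fun _ => rfl
  mul_one _ := Homeomorph.ext fun _ => rfl
  inv_mul_cancel a := Homeomorph.ext a.symm_apply_apply

/-- A compact set of continuous self-maps of a locally compact metric space (in the
compact-open topology) is equicontinuous at every point. -/
lemma equicont_aux {M : Type*} [MetricSpace M] [LocallyCompactSpace M]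
    (S : Set C(M, M)) (hS : IsCompact S) (x : M) {ε : ℝ} (hε : 0 < ε) :
    ∃ δ > 0, ∀ y, dist x y < δ → ∀ f ∈ S, dist (f x) (f y) < ε := by
  obtain ⟨K, hKc, hKx⟩ := exists_compact_mem_nhds x
  haveI : CompactSpace K := isCompact_iff_compactSpace.mp hKc
  have hSK : IsCompact ((fun f : C(M, M) => f.restrict K) '' S) :=
    hS.image (ContinuousMap.continuous_restrict K)
  have htb := hSK.totallyBounded
  rw [Metric.totallyBounded_iff] at htb
  obtain ⟨t, htfin, htsub⟩ := htb (ε / 3) (by linarith)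
  haveI : Finite t := htfin.to_subtype
  have hx : x ∈ K := mem_of_mem_nhds hKx
  have hec : EquicontinuousAt (fun f : t => ⇑(f : C(K, M))) ⟨x, hx⟩ :=
    equicontinuousAt_finite.mpr fun f => (f : C(K, M)).continuous.continuousAt
  obtain ⟨δ₁, hδ₁, hδ⟩ := Metric.equicontinuousAt_iff.mp hec (ε / 3) (by linarith)
  obtain ⟨δ₂, hδ₂, hK2⟩ := Metric.mem_nhds_iff.mp hKx
  refine ⟨min δ₁ δ₂, lt_min hδ₁ hδ₂, fun y hy f hf => ?_⟩
  have hyK : y ∈ K := hK2 (by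
    simp only [Metric.mem_ball, dist_comm]
    exact lt_of_lt_of_le hy (min_le_right _ _))
  obtain ⟨g, hgt, hg⟩ : ∃ g ∈ t, f.restrict K ∈ Metric.ball g (ε / 3) := by
    have := htsub (Set.mem_image_of_mem _ hf)
    simpa using this
  rw [Metric.mem_ball] at hg
  have h1 : dist (f x) (g ⟨x, hx⟩) ≤ dist (f.restrict K) g :=
    ContinuousMap.dist_apply_le_dist (f := f.restrict K) (g := g) (⟨x, hx⟩ : K)
  have h3 : dist (f y) (g ⟨y, hyK⟩) ≤ dist (f.restrict K) g :=
    ContinuousMap.dist_apply_le_dist (f := f.restrict K) (g := g) (⟨y, hyK⟩ : K)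
  have h2 : dist (g ⟨x, hx⟩) (g ⟨y, hyK⟩) < ε / 3 := by
    refine hδ ⟨y, hyK⟩ ?_ ⟨g, hgt⟩
    rw [Subtype.dist_eq]
    exact lt_of_lt_of_le (by rwa [dist_comm]) (min_le_left _ _)
  calc dist (f x) (f y) ≤ dist (f x) (g ⟨x, hx⟩) + dist (g ⟨x, hx⟩) (g ⟨y, hyK⟩)
        + dist (g ⟨y, hyK⟩) (f y) := dist_triangle4 _ _ _ _
    _ < ε := by rw [dist_comm (g ⟨y, hyK⟩)]; linarith

/-- averaging a distance over a compact group `A` of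
homeomorphisms (in the topology of uniform convergence on compacta)
normalising a group `J` of isometries.  The distance
`d_A(x,y) = max_{a ∈ A} d(a x, a y)` induces the same topology, is invariant
under all maps `g ∘ a` with `g ∈ J`, `a ∈ A`, and if every element of `A` is
an `(L,C)`-quasi-isometry then the identity is an `(L,C)`-quasi-isometry from
`d` to `d_A`. -/
theorem statement17 (M : Type*) [MetricSpace M] [LocallyCompactSpace M]
    (A J : Subgroup (M ≃ₜ M))
    (hA : letI : TopologicalSpace (M ≃ₜ M) := TopologicalSpace.induced (fun f : M ≃ₜ M => (f : C(M, M))) ContinuousMap.compactOpen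
      IsCompact (A : Set (M ≃ₜ M)))
    (hJ : ∀ g ∈ J, Isometry (⇑g : M → M))
    (hnorm : ∀ a ∈ A, ∀ g ∈ J, a * g * a⁻¹ ∈ J)
    (d_A : M → M → ℝ)
    (hdA : ∀ x y : M, IsGreatest {r : ℝ | ∃ a ∈ A, r = dist (a x) (a y)} (d_A x y)) :
    IsCompatibleDist M d_A ∧
    (∀ g ∈ J, ∀ a ∈ A, ∀ x y : M, d_A (g (a x)) (g (a y)) = d_A x y) ∧
    ∀ L C : ℝ,
      (∀ a ∈ A, IsQuasiIsometry L C (fun x y : M => dist x y)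
        (fun x y : M => dist x y) (⇑a : M → M)) →
      IsQuasiIsometry L C (fun x y : M => dist x y) d_A (id : M → M) := by
  letI τ : TopologicalSpace (M ≃ₜ M) :=
    TopologicalSpace.induced (fun f : M ≃ₜ M => (f : C(M, M))) ContinuousMap.compactOpen
  have hSc : IsCompact ((fun f : M ≃ₜ M => (f : C(M, M))) '' (A : Set (M ≃ₜ M))) :=
    hA.image continuous_induced_dom
  have hmul : ∀ (a b : M ≃ₜ M) (x : M), (a * b) x = a (b x) := fun _ _ _ => rfl
  have hinv : ∀ (a : M ≃ₜ M) (x : M), a⁻¹ (a x) = x := fun a x => a.symm_apply_apply x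
  have hle : ∀ x y : M, dist x y ≤ d_A x y := fun x y =>
    (hdA x y).2 ⟨1, A.one_mem, rfl⟩
  have hself : ∀ x : M, d_A x x = 0 := fun x => by
    obtain ⟨a, _, he⟩ := (hdA x x).1; rw [he, dist_self]
  have hzero : ∀ x y : M, d_A x y = 0 ↔ x = y := fun x y =>
    ⟨fun h => dist_le_zero.mp (h ▸ hle x y), fun h => h ▸ hself x⟩
  have hsymm : ∀ x y : M, d_A x y = d_A y x := by
    intro x y
    have hset : {r : ℝ | ∃ a ∈ A, r = dist (a y) (a x)}
        = {r : ℝ | ∃ a ∈ A, r = dist (a x) (a y)} := by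
      ext r; simp only [Set.mem_setOf_eq]
      exact ⟨fun ⟨a, ha, he⟩ => ⟨a, ha, he.trans (dist_comm _ _)⟩,
        fun ⟨a, ha, he⟩ => ⟨a, ha, he.trans (dist_comm _ _)⟩⟩
    exact (hdA x y).unique (hset ▸ hdA y x)
  have htri : ∀ x y z : M, d_A x z ≤ d_A x y + d_A y z := by
    intro x y z
    obtain ⟨a, ha, he⟩ := (hdA x z).1
    rw [he]
    calc dist (a x) (a z) ≤ dist (a x) (a y) + dist (a y) (a z) := dist_triangle _ _ _
      _ ≤ d_A x y + d_A y z :=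
        add_le_add ((hdA x y).2 ⟨a, ha, rfl⟩) ((hdA y z).2 ⟨a, ha, rfl⟩)
  have key : ∀ x : M, ∀ ε : ℝ, 0 < ε → ∃ δ > 0, ∀ y, dist x y < δ → d_A x y < ε := by
    intro x ε hε
    obtain ⟨δ, hδ0, hδ⟩ := equicont_aux _ hSc x hε
    refine ⟨δ, hδ0, fun y hy => ?_⟩
    obtain ⟨a, ha, he⟩ := (hdA x y).1
    rw [he]
    exact hδ y hy _ (Set.mem_image_of_mem _ ha)
  have htop : ∀ (x : M) (s : Set M), s ∈ nhds x ↔ ∃ ε > 0, {y : M | d_A x y < ε} ⊆ s := by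
    intro x s
    constructor
    · intro hs
      obtain ⟨ε, hε, hball⟩ := Metric.mem_nhds_iff.mp hs
      refine ⟨ε, hε, fun y hy => hball ?_⟩
      rw [Metric.mem_ball, dist_comm]
      exact lt_of_le_of_lt (hle x y) hy
    · rintro ⟨ε, hε, hsub⟩
      obtain ⟨δ, hδ0, hδ⟩ := key x ε hε
      rw [Metric.mem_nhds_iff]
      refine ⟨δ, hδ0, fun y hy => hsub ?_⟩
      rw [Metric.mem_ball, dist_comm] at hy
      exact hδ y hy
  have hinvar : ∀ g ∈ J, ∀ a ∈ A, ∀ x y : M, d_A (g (a x)) (g (a y)) = d_A x y := by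
    intro g hg a ha x y
    have hcalc : ∀ b ∈ A, dist (b (g (a x))) (b (g (a y))) = dist ((b * a) x) ((b * a) y) := by
      intro b hb
      have hG := hJ (b * g * b⁻¹) (hnorm b hb g hg)
      have e : ∀ z : M, b (g (a z)) = (b * g * b⁻¹) ((b * a) z) := by
        intro z
        rw [hmul, hmul b a, hmul, hinv]
      rw [e x, e y, hG.dist_eq]
    have hset : {r : ℝ | ∃ b ∈ A, r = dist (b (g (a x))) (b (g (a y)))}
        = {r : ℝ | ∃ c ∈ A, r = dist (c x) (c y)} := by
      ext r; simp only [Set.mem_setOf_eq]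
      constructor
      · rintro ⟨b, hb, rfl⟩
        exact ⟨b * a, A.mul_mem hb ha, hcalc b hb⟩
      · rintro ⟨c, hc, rfl⟩
        refine ⟨c * a⁻¹, A.mul_mem hc (A.inv_mem ha), ?_⟩
        rw [hcalc (c * a⁻¹) (A.mul_mem hc (A.inv_mem ha)), inv_mul_cancel_right]
    exact (hdA (g (a x)) (g (a y))).unique (hset ▸ hdA x y)
  refine ⟨⟨hzero, hsymm, htri, htop⟩, hinvar, ?_⟩
  intro L C hQI
  have h1 := hQI 1 A.one_mem
  constructor
  · intro x y
    constructor
    · exact le_trans ((h1.1 x y).1) (hle x y)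
    · obtain ⟨a, ha, he⟩ := (hdA x y).1
      exact he ▸ ((hQI a ha).1 x y).2
  · intro z
    have h := (h1.1 z z).1
    simp only [dist_self, mul_zero, zero_sub] at h
    refine ⟨z, ?_⟩
    show d_A z z ≤ C
    rw [hself z]
    linarith
end

section
/- Let (M,d) be a homogeneous metric space of polynomial growth. Then the group Iso(M,d), and also its identity component, is of polynomial growth: there exist a compact neighbourhood U of the identity, and constants C', Q' such that μ(Uⁿ) ≤ C'·nᵠ' for all positive integers n, where μ is a left Haar measure on the group. -/
/-!
With the topology of pointwise convergence, `Iso(M)` is a topological group. Homogeneity and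
local compactness give `δ > 0` such that all closed balls of radius `2δ` are compact; let `V` be
the set of isometries moving a base point `o` by at most `δ`. If `g ∈ V`, then `g` maps the points
reached from `o` by `n` steps of length `≤ δ` to points reached in `n + 1` steps, and these sets
are compact and exhaust the connected space `M`; since pointwise limits of isometries whose
inverses also converge are isometries, `V` is compact. It is a neighbourhood of `1`, and it
generates `Iso(M)` because the orbit of `o` under `⟨V⟩` is clopen.

Every element of `Vⁿ` moves `o` by at most `nδ`, so `Vⁿ` is covered by left translates of `V`,
one for each point of a maximal `δ/2`-separated subset of `B(o, nδ)`. The `δ/4`-balls around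
these points are disjoint and have equal positive measure, so their number is at most
`m(B(o, nδ + δ/4)) / m(B(o, δ/4)) ≤ C nᵠ`. The same argument applies to the identity component,
which is closed, and connected, hence generated by its intersection with `V`.
-/

open Pointwise MeasureTheory

/-- A homogeneous metric space has polynomial growth: some nonzero
isometry-invariant Radon measure satisfies `m(B(o,r)) ≤ C·r^Q` for all
sufficiently large `r`. -/
def MetricPolynomialGrowth (M : Type*) [MetricSpace M] [MeasurableSpace M] : Prop :=
  ∃ m : MeasureTheory.Measure M, m ≠ 0 ∧
    (∀ s : Set M, IsCompact s → m s < ⊤) ∧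
    (∀ f : M ≃ᵢ M, MeasureTheory.Measure.map (⇑f) m = m) ∧
    ∃ (C Q R₀ : ℝ) (o : M), ∀ r : ℝ, R₀ ≤ r →
      m (Metric.ball o r) ≤ ENNReal.ofReal (C * r ^ Q)

/-- A locally compact group has polynomial growth: some (left) Haar measure,
some compact generating neighbourhood `U` of the identity, and constants
`C`, `Q` with `μ(Uⁿ) ≤ C·n^Q` for all positive `n`. -/
def HasPolynomialGrowth (G : Type*) [Group G] [TopologicalSpace G] [MeasurableSpace G] : Prop :=
  ∃ (μ : MeasureTheory.Measure G) (U : Set G),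
    μ.IsHaarMeasure ∧ IsCompact U ∧ U ∈ nhds (1 : G) ∧
    Subgroup.closure U = ⊤ ∧
    ∃ C Q : ℝ, ∀ n : ℕ, 0 < n → μ (U ^ n) ≤ ENNReal.ofReal (C * (n : ℝ) ^ Q)

open Set Filter Topology Metric
open scoped ENNReal NNReal Function

namespace IsometryEquiv

variable {M : Type*} [MetricSpace M]

instance : TopologicalSpace (M ≃ᵢ M) :=
  .induced (fun f : M ≃ᵢ M => (⇑f : M → M)) Pi.topologicalSpace

theorem isEmbedding_coeFn : IsEmbedding (fun f : M ≃ᵢ M => (⇑f : M → M)) :=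
  ⟨⟨rfl⟩, DFunLike.coe_injective⟩

theorem continuous_eval_const (x : M) : Continuous fun f : M ≃ᵢ M => f x :=
  (continuous_apply x).comp isEmbedding_coeFn.continuous

theorem tendsto_dist_eval_const (x : M) (f₀ : M ≃ᵢ M) :
    Tendsto (fun f : M ≃ᵢ M => dist (f x) (f₀ x)) (𝓝 f₀) (𝓝 0) :=
  tendsto_iff_dist_tendsto_zero.1 ((continuous_eval_const x).tendsto f₀)

instance : IsTopologicalGroup (M ≃ᵢ M) where
  continuous_mul := by
    refine isEmbedding_coeFn.continuous_iff.2 (continuous_pi fun x => ?_)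
    refine continuous_iff_continuousAt.2 fun p₀ => tendsto_iff_dist_tendsto_zero.2 ?_
    have h₁ := (tendsto_dist_eval_const x p₀.2).comp continuous_snd.continuousAt
    have h₂ := (tendsto_dist_eval_const (p₀.2 x) p₀.1).comp continuous_fst.continuousAt
    refine squeeze_zero (fun _ => dist_nonneg) (fun p => ?_) (by simpa using h₁.add h₂)
    calc dist (p.1 (p.2 x)) (p₀.1 (p₀.2 x))
        ≤ dist (p.1 (p.2 x)) (p.1 (p₀.2 x)) + dist (p.1 (p₀.2 x)) (p₀.1 (p₀.2 x)) :=
          dist_triangle _ _ _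
      _ = dist (p.2 x) (p₀.2 x) + dist (p.1 (p₀.2 x)) (p₀.1 (p₀.2 x)) := by rw [p.1.dist_eq]
  continuous_inv := by
    refine isEmbedding_coeFn.continuous_iff.2 (continuous_pi fun x => ?_)
    refine continuous_iff_continuousAt.2 fun g₀ => tendsto_iff_dist_tendsto_zero.2 ?_
    refine (tendsto_dist_eval_const (g₀⁻¹ x) g₀).congr fun g => ?_
    show dist (g (g₀⁻¹ x)) (g₀ (g₀⁻¹ x)) = dist (g⁻¹ x) (g₀⁻¹ x)
    rw [apply_inv_self, ← g.dist_eq (g⁻¹ x), apply_inv_self, dist_comm]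

/-- The limit of the inverses is a right inverse of the limit. -/
theorem exists_le_nhds_of_tendsto_apply {F : Filter (M ≃ᵢ M)} [F.NeBot] {u w : M → M}
    (hu : ∀ x, Tendsto (fun g : M ≃ᵢ M => g x) F (𝓝 (u x)))
    (hw : ∀ x, Tendsto (fun g : M ≃ᵢ M => g⁻¹ x) F (𝓝 (w x))) :
    ∃ e : M ≃ᵢ M, F ≤ 𝓝 e := by
  have hiso : Isometry u := Isometry.of_dist_eq fun x y =>
    tendsto_nhds_unique (by simpa only [IsometryEquiv.dist_eq] using (hu x).dist (hu y))
      tendsto_const_nhds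
  have hinv : ∀ x, u (w x) = x := fun x => by
    have h₁ : Tendsto (fun g : M ≃ᵢ M => dist (w x) (g⁻¹ x)) F (𝓝 0) := by
      simpa using (tendsto_const_nhds (x := w x)).dist (hw x)
    have h₂ : Tendsto (fun g : M ≃ᵢ M => dist (w x) (g⁻¹ x)) F (𝓝 (dist (u (w x)) x)) := by
      refine ((hu (w x)).dist tendsto_const_nhds).congr fun g => ?_
      rw [← g.dist_eq (w x) (g⁻¹ x), apply_inv_self]
    exact dist_eq_zero.1 (tendsto_nhds_unique h₂ h₁)
  refine ⟨mk' u w hinv hiso, tendsto_id'.1 ?_⟩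
  exact isEmbedding_coeFn.isInducing.tendsto_nhds_iff.2 (tendsto_pi_nhds.2 hu)

theorem isCompact_of_forall_isCompact_apply {S : Set (M ≃ᵢ M)} (hS : IsClosed S)
    (hS_inv : ∀ g ∈ S, g⁻¹ ∈ S) (hK : ∀ x, ∃ K, IsCompact K ∧ ∀ g ∈ S, g x ∈ K) :
    IsCompact S := by
  choose K hKc hKS using hK
  refine isCompact_iff_ultrafilter_le_nhds.2 fun F hF => ?_
  have hSF : S ∈ F := le_principal_iff.1 hF
  have hlim : ∀ x (φ : (M ≃ᵢ M) → M), (∀ g ∈ S, φ g ∈ K x) → ∃ a, Tendsto φ F (𝓝 a) :=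
    fun x φ hφ => by
      obtain ⟨a, -, ha⟩ := (hKc x).ultrafilter_le_nhds (F.map φ) <|
        le_principal_iff.2 (Ultrafilter.mem_map.2 (mem_of_superset (y := φ ⁻¹' K x) hSF hφ))
      exact ⟨a, ha⟩
  choose u hu using fun x => hlim x (· x) (hKS x)
  choose w hw using fun x => hlim x (fun g => g⁻¹ x) fun g hg => hKS x _ (hS_inv g hg)
  obtain ⟨e, he⟩ := exists_le_nhds_of_tendsto_apply hu hw
  exact ⟨e, hS.mem_of_tendsto (tendsto_id'.2 he) (eventually_of_mem hSF fun _ => id), he⟩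

end IsometryEquiv

section Displacement

variable {M : Type*} [MetricSpace M]

def displacementBall (o : M) (r : ℝ) : Set (M ≃ᵢ M) := {g | dist (g o) o ≤ r}

variable {o : M} {r s : ℝ}

theorem isClosed_displacementBall : IsClosed (displacementBall o r) :=
  isClosed_le ((IsometryEquiv.continuous_eval_const o).dist continuous_const) continuous_const

theorem displacementBall_mem_nhds_one (hr : 0 < r) : displacementBall o r ∈ 𝓝 1 :=
  show (fun g : M ≃ᵢ M => g o) ⁻¹' closedBall o r ∈ 𝓝 1 from
    (IsometryEquiv.continuous_eval_const o).continuousAt.preimage_mem_nhds <|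
      closedBall_mem_nhds o hr

theorem inv_mul_mem_displacementBall {g h : M ≃ᵢ M} (hgh : dist (g o) (h o) ≤ r) :
    g⁻¹ * h ∈ displacementBall o r := by
  show dist ((g⁻¹ * h) o) o ≤ r
  rwa [IsometryEquiv.mul_apply, ← g.dist_eq, IsometryEquiv.apply_inv_self, dist_comm]

theorem inv_mem_displacementBall {g : M ≃ᵢ M} (hg : g ∈ displacementBall o r) :
    g⁻¹ ∈ displacementBall o r := by
  have hg' : dist (g o) ((1 : M ≃ᵢ M) o) ≤ r := hg
  simpa using inv_mul_mem_displacementBall hg'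

theorem displacementBall_mul_subset :
    displacementBall o r * displacementBall o s ⊆ displacementBall o (r + s) := by
  rintro _ ⟨g, hg, h, hh, rfl⟩
  calc dist (g (h o)) o ≤ dist (g (h o)) (g o) + dist (g o) o := dist_triangle _ _ _
    _ ≤ s + r := by rw [g.dist_eq]; exact add_le_add hh hg
    _ = r + s := add_comm s r

theorem pow_preimage_displacementBall_subset {Γ : Type*} [Group Γ] (π : Γ →* (M ≃ᵢ M))
    (n : ℕ) : (π ⁻¹' displacementBall o r) ^ n ⊆ π ⁻¹' displacementBall o (n * r) := by
  induction n with
  | zero => simp [displacementBall]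
  | succ n ih =>
    rw [pow_succ, Nat.cast_succ, add_one_mul]
    exact (Set.mul_subset_mul ih subset_rfl).trans
      ((Set.preimage_mul_preimage_subset π).trans (preimage_mono displacementBall_mul_subset))

end Displacement

theorem eq_univ_of_forall_dist_lt_imp_mem {X : Type*} [PseudoMetricSpace X] [ConnectedSpace X]
    {S : Set X} {δ : ℝ} (hδ : 0 < δ) (hS : S.Nonempty)
    (hstep : ∀ x ∈ S, ∀ y, dist x y < δ → y ∈ S) : S = univ := by
  refine IsClopen.eq_univ ⟨?_, ?_⟩ hS
  · refine isOpen_compl_iff.1 (Metric.isOpen_iff.2 fun x hx => ⟨δ, hδ, fun y hy hyS => ?_⟩)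
    exact hx (hstep y hyS x (mem_ball.1 hy))
  · exact Metric.isOpen_iff.2 fun x hx => ⟨δ, hδ, fun y hy => hstep x hx y (mem_ball'.1 hy)⟩

section Chains

variable {M : Type*} [MetricSpace M]

def chainReach (o : M) (δ : ℝ) : ℕ → Set M
  | 0 => {o}
  | n + 1 => ⋃ z ∈ chainReach o δ n, closedBall z δ

variable {o : M} {δ : ℝ}

theorem iUnion_chainReach [ConnectedSpace M] (hδ : 0 < δ) : ⋃ n, chainReach o δ n = univ :=
  eq_univ_of_forall_dist_lt_imp_mem hδ ⟨o, mem_iUnion.2 ⟨0, rfl⟩⟩ fun x hx y hxy => by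
    obtain ⟨n, hn⟩ := mem_iUnion.1 hx
    exact mem_iUnion.2 ⟨n + 1, mem_biUnion hn (mem_closedBall'.2 hxy.le)⟩

theorem isCompact_chainReach (hδ : 0 < δ) (hcomp : ∀ x : M, IsCompact (closedBall x (2 * δ)))
    (n : ℕ) : IsCompact (chainReach o δ n) := by
  induction n with
  | zero => exact isCompact_singleton
  | succ n ih =>
    obtain ⟨t, -, ht⟩ := ih.elim_nhds_subcover (fun z => ball z δ)
      fun z _ => ball_mem_nhds z hδ
    refine (t.finite_toSet.isCompact_biUnion fun z _ => hcomp z).of_isClosed_subset ?_ ?_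
    · rw [chainReach, ← ih.cthickening_eq_biUnion_closedBall hδ.le]
      exact isClosed_cthickening
    · refine iUnion₂_subset fun z hz y hy => ?_
      obtain ⟨w, hw, hzw⟩ := mem_iUnion₂.1 (ht hz)
      refine mem_biUnion hw (mem_closedBall.2 ?_)
      linarith [dist_triangle y z w, mem_closedBall.1 hy, mem_ball.1 hzw]

theorem apply_mem_chainReach_succ {g : M ≃ᵢ M} (hg : g ∈ displacementBall o δ) :
    ∀ {n x}, x ∈ chainReach o δ n → g x ∈ chainReach o δ (n + 1)
  | 0, _, rfl => mem_biUnion rfl hg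
  | n + 1, x, hx => by
    obtain ⟨z, hz, hxz⟩ := mem_iUnion₂.1 hx
    exact mem_biUnion (apply_mem_chainReach_succ hg hz)
      (by rwa [mem_closedBall, g.dist_eq])

theorem isCompact_displacementBall [ConnectedSpace M] (hδ : 0 < δ)
    (hcomp : ∀ x : M, IsCompact (closedBall x (2 * δ))) : IsCompact (displacementBall o δ) := by
  refine IsometryEquiv.isCompact_of_forall_isCompact_apply isClosed_displacementBall
    (fun _ => inv_mem_displacementBall) fun x => ?_
  obtain ⟨n, hn⟩ := mem_iUnion.1 ((iUnion_chainReach (o := o) hδ).symm ▸ mem_univ x)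
  exact ⟨_, isCompact_chainReach hδ hcomp (n + 1), fun g hg => apply_mem_chainReach_succ hg hn⟩

theorem sigmaCompactSpace_of_isCompact_closedBall [ConnectedSpace M] (hδ : 0 < δ)
    (hcomp : ∀ x : M, IsCompact (closedBall x (2 * δ))) : SigmaCompactSpace M := by
  obtain ⟨o⟩ := ‹ConnectedSpace M›.toNonempty
  exact ⟨⟨chainReach o δ, isCompact_chainReach hδ hcomp, iUnion_chainReach hδ⟩⟩

theorem closure_displacementBall_eq_top [ConnectedSpace M]
    (hhom : ∀ x y : M, ∃ f : M ≃ᵢ M, f x = y) (hδ : 0 < δ) :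
    Subgroup.closure (displacementBall o δ) = ⊤ := by
  set H := Subgroup.closure (displacementBall o δ)
  have hmem : ∀ {g h : M ≃ᵢ M}, g ∈ H → dist (g o) (h o) ≤ δ → h ∈ H := fun hg hgh => by
    simpa using H.mul_mem hg (Subgroup.subset_closure (inv_mul_mem_displacementBall hgh))
  have horbit : {x | ∃ g ∈ H, g o = x} = univ :=
    eq_univ_of_forall_dist_lt_imp_mem hδ ⟨o, 1, H.one_mem, rfl⟩ fun _ ⟨g, hg, hgx⟩ y hxy => by
      obtain ⟨h, rfl⟩ := hhom o y
      exact ⟨h, hmem hg (hgx ▸ hxy.le), rfl⟩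
  refine eq_top_iff.2 fun g _ => ?_
  obtain ⟨h, hh, hhg⟩ := horbit.symm ▸ mem_univ (g o)
  exact hmem hh (by rw [hhg, dist_self]; exact hδ.le)

end Chains

theorem exists_pos_forall_isCompact_closedBall {M : Type*} [MetricSpace M] [Nonempty M]
    [WeaklyLocallyCompactSpace M] (hhom : ∀ x y : M, ∃ f : M ≃ᵢ M, f x = y) :
    ∃ ε > 0, ∀ x : M, IsCompact (closedBall x ε) := by
  obtain ⟨o⟩ := ‹Nonempty M›
  obtain ⟨ε, hε, ho⟩ := exists_isCompact_closedBall o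
  refine ⟨ε, hε, fun x => ?_⟩
  obtain ⟨f, rfl⟩ := hhom o x
  simpa only [f.image_closedBall] using ho.image f.continuous

theorem Subgroup.closure_eq_top_of_mem_nhds_one {G : Type*} [Group G] [TopologicalSpace G]
    [IsTopologicalGroup G] [ConnectedSpace G] {U : Set G} (hU : U ∈ 𝓝 1) :
    Subgroup.closure U = ⊤ := by
  have hopen := Subgroup.isOpen_of_mem_nhds _ (mem_of_superset hU Subgroup.subset_closure)
  exact Subgroup.coe_eq_univ.1
    (IsClopen.eq_univ ⟨Subgroup.isClosed_of_isOpen _ hopen, hopen⟩ ⟨1, Subgroup.one_mem _⟩)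

section Measure

variable {X : Type*} [PseudoMetricSpace X] [MeasurableSpace X] {m : Measure X}

theorem measure_ball_eq_of_transitive [BorelSpace X]
    (hinv : ∀ f : X ≃ᵢ X, m.map f = m) (hhom : ∀ x y : X, ∃ f : X ≃ᵢ X, f x = y) (x y : X) (r : ℝ) :
    m (ball x r) = m (ball y r) := by
  obtain ⟨f, rfl⟩ := hhom y x
  calc m (ball (f y) r) = m.map f (ball (f y) r) := by rw [hinv]
    _ = m (ball y r) := by
      rw [Measure.map_apply f.continuous.measurable measurableSet_ball, f.preimage_ball,
        f.symm_apply_apply]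

theorem measure_ball_pos_of_forall_eq [LindelofSpace X] (hm : m ≠ 0) {r : ℝ} (hr : 0 < r)
    (hball : ∀ x y : X, m (ball x r) = m (ball y r)) (x : X) : 0 < m (ball x r) := by
  refine pos_iff_ne_zero.2 fun h0 => hm ?_
  obtain ⟨t, ht, -, hcover⟩ :=
    isLindelof_univ.elim_nhds_subcover (fun y : X => ball y r) fun y _ => ball_mem_nhds y hr
  exact Measure.measure_univ_eq_zero.1 <| measure_mono_null hcover <|
    (measure_biUnion_null_iff ht).2 fun y _ => (hball y x).trans h0

theorem packingNumber_mul_measure_ball_le [OpensMeasurableSpace X] (ε : ℝ≥0) (A : Set X)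
    (x₀ : X) (hball : ∀ x y : X, m (ball x (ε / 2)) = m (ball y (ε / 2))) :
    packingNumber ε A * m (ball x₀ (ε / 2)) ≤ m (thickening (ε / 2) A) := by
  simp only [packingNumber, ENat.toENNReal_iSup, ENNReal.iSup_mul, iSup_le_iff]
  intro C hCA hC
  have hdisj : Pairwise (Disjoint on fun x : C => ball (x : X) (ε / 2)) := fun x y hxy => by
    have hsep : (ε : ℝ≥0∞) < edist (x : X) y := hC x.2 y.2 (Subtype.coe_ne_coe.2 hxy)
    rw [edist_nndist, ENNReal.coe_lt_coe, ← NNReal.coe_lt_coe, coe_nndist] at hsep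
    exact ball_disjoint_ball (by linarith)
  calc (C.encard : ℝ≥0∞) * m (ball x₀ (ε / 2)) = ∑' x : C, m (ball (x : X) (ε / 2)) := by
        simp only [hball _ x₀, ENNReal.tsum_const, Set.encard]
    _ ≤ m (⋃ x : C, ball (x : X) (ε / 2)) :=
        tsum_meas_le_meas_iUnion_of_disjoint m (fun _ => measurableSet_ball) hdisj
    _ ≤ m (thickening (ε / 2) A) :=
        measure_mono (iUnion_subset fun x => ball_subset_thickening (hCA x.2) _)

theorem packingNumber_closedBall_mul_measure_ball_le [OpensMeasurableSpace X] (ε : ℝ≥0)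
    (x₀ : X) (R : ℝ) (hball : ∀ x y : X, m (ball x (ε / 2)) = m (ball y (ε / 2))) :
    packingNumber ε (closedBall x₀ R) * m (ball x₀ (ε / 2)) ≤ m (ball x₀ (R + ε / 2)) := by
  refine (packingNumber_mul_measure_ball_le ε _ x₀ hball).trans (measure_mono fun x hx => ?_)
  obtain ⟨z, hz, hxz⟩ := mem_thickening_iff.1 hx
  exact mem_ball.2 (by linarith [dist_triangle x z x₀, mem_closedBall.1 hz])

end Measure

section Group

variable {M : Type*} [MetricSpace M] {Γ : Type*} [Group Γ] [MeasurableSpace Γ]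
  [MeasurableMul Γ] (π : Γ →* (M ≃ᵢ M)) (μ : Measure Γ) [μ.IsMulLeftInvariant] {o : M}

theorem measure_preimage_closedBall_le (p : M) (r : ℝ) :
    μ ((fun γ => π γ o) ⁻¹' closedBall p r) ≤ μ (π ⁻¹' displacementBall o (2 * r)) := by
  rcases eq_empty_or_nonempty ((fun γ => π γ o) ⁻¹' closedBall p r) with he | ⟨γ₀, hγ₀⟩
  · simp [he]
  calc μ ((fun γ => π γ o) ⁻¹' closedBall p r)
      ≤ μ ((fun γ => γ₀⁻¹ * γ) ⁻¹' (π ⁻¹' displacementBall o (2 * r))) :=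
        measure_mono fun γ hγ => by
          show π (γ₀⁻¹ * γ) ∈ displacementBall o (2 * r)
          rw [map_mul, map_inv]
          refine inv_mul_mem_displacementBall ?_
          linarith [dist_triangle_right (π γ₀ o) (π γ o) p, mem_closedBall.1 hγ,
            mem_closedBall.1 hγ₀]
    _ = μ (π ⁻¹' displacementBall o (2 * r)) := measure_preimage_mul μ γ₀⁻¹ _

theorem measure_preimage_displacementBall_le_packingNumber_mul {R : ℝ} {ε : ℝ≥0}
    (hfin : packingNumber ε (closedBall o R) ≠ ⊤) :
    μ (π ⁻¹' displacementBall o R) ≤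
      packingNumber ε (closedBall o R) * μ (π ⁻¹' displacementBall o (2 * ε)) := by
  set N := maximalSeparatedSet ε (closedBall o R)
  have hcover := isCover_iff_subset_iUnion_closedBall.1 (isCover_maximalSeparatedSet hfin)
  have hN : N.Countable :=
    (encard_ne_top_iff.1 (by rwa [encard_maximalSeparatedSet hfin])).countable
  calc μ (π ⁻¹' displacementBall o R)
      ≤ μ (⋃ p ∈ N, (fun γ => π γ o) ⁻¹' closedBall p ε) :=
        measure_mono fun γ hγ => by simpa using hcover (mem_closedBall.2 hγ)
    _ ≤ ∑' p : N, μ ((fun γ => π γ o) ⁻¹' closedBall (p : M) ε) := measure_biUnion_le μ hN _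
    _ ≤ ∑' _ : N, μ (π ⁻¹' displacementBall o (2 * ε)) :=
        ENNReal.tsum_le_tsum fun p => measure_preimage_closedBall_le π μ p ε
    _ = packingNumber ε (closedBall o R) * μ (π ⁻¹' displacementBall o (2 * ε)) := by
        rw [ENNReal.tsum_const, ← encard_maximalSeparatedSet hfin]
        rfl

end Group

theorem exists_rpow_bound_comp_affine {f : ℝ → ℝ≥0∞} (hf : Monotone f) {C Q R₀ : ℝ}
    (h : ∀ ρ, R₀ ≤ ρ → f ρ ≤ ENNReal.ofReal (C * ρ ^ Q)) (a b : ℝ) :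
    ∃ C' Q' : ℝ, ∀ n : ℕ, 0 < n → f (n * a + b) ≤ ENNReal.ofReal (C' * (n : ℝ) ^ Q') := by
  set D := |a| + |b| + |R₀| + 1
  refine ⟨|C| * D ^ max Q 0, max Q 0, fun n hn => ?_⟩
  have hn : (1 : ℝ) ≤ n := Nat.one_le_cast.2 hn
  have hD : 1 ≤ D := by linarith [abs_nonneg a, abs_nonneg b, abs_nonneg R₀]
  have hnD : 1 ≤ n * D := one_le_mul_of_one_le_of_one_le hn hD
  have hab : n * a + b ≤ n * D := by
    nlinarith [le_abs_self a, le_abs_self b, abs_nonneg b, abs_nonneg R₀]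
  have hR₀ : R₀ ≤ n * D := by nlinarith [le_abs_self R₀, abs_nonneg a, abs_nonneg b]
  calc f (n * a + b) ≤ f (n * D) := hf hab
    _ ≤ ENNReal.ofReal (C * (n * D) ^ Q) := h _ hR₀
    _ ≤ ENNReal.ofReal (|C| * D ^ max Q 0 * (n : ℝ) ^ max Q 0) := by
      refine ENNReal.ofReal_le_ofReal ?_
      calc C * (n * D) ^ Q ≤ |C| * (n * D) ^ max Q 0 :=
            mul_le_mul (le_abs_self C) (Real.rpow_le_rpow_of_exponent_le hnD (le_max_left _ _))
              (by positivity) (abs_nonneg C)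
        _ = |C| * D ^ max Q 0 * (n : ℝ) ^ max Q 0 := by
          rw [Real.mul_rpow (by positivity) (by positivity)]; ring

section Growth

variable {M : Type*} [MetricSpace M] [MeasurableSpace M] [OpensMeasurableSpace M]
  {Γ : Type*} [Group Γ] [MeasurableSpace Γ] [MeasurableMul Γ] (π : Γ →* (M ≃ᵢ M)) (μ : Measure Γ)
  [μ.IsMulLeftInvariant] {o : M}

theorem exists_measure_pow_preimage_displacementBall_le (m : Measure M) {r : ℝ} (hr : 0 < r)
    (hball : ∀ x y : M, m (ball x (r / 4)) = m (ball y (r / 4)))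
    (hc₀ : m (ball o (r / 4)) ≠ 0) (hc : m (ball o (r / 4)) ≠ ⊤) {C Q R₀ : ℝ}
    (hgrowth : ∀ ρ, R₀ ≤ ρ → m (ball o ρ) ≤ ENNReal.ofReal (C * ρ ^ Q))
    (hU : μ (π ⁻¹' displacementBall o r) ≠ ⊤) :
    ∃ C' Q' : ℝ, ∀ n : ℕ, 0 < n →
      μ ((π ⁻¹' displacementBall o r) ^ n) ≤ ENNReal.ofReal (C' * (n : ℝ) ^ Q') := by
  obtain ⟨C₁, Q', hpoly⟩ := exists_rpow_bound_comp_affine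
    (fun _ _ h => measure_mono (ball_subset_ball h)) hgrowth r (r / 4)
  set U := π ⁻¹' displacementBall o r
  set c := m (ball o (r / 4))
  refine ⟨C₁ * (μ U / c).toReal, Q', fun n hn => ?_⟩
  set ε : ℝ≥0 := ⟨r / 2, by positivity⟩
  have hε : (ε : ℝ) / 2 = r / 4 := show r / 2 / 2 = r / 4 by ring
  have h2ε : 2 * (ε : ℝ) = r := show 2 * (r / 2) = r by ring
  have hpack : packingNumber ε (closedBall o (n * r)) * c ≤ m (ball o (n * r + r / 4)) := by
    have h := packingNumber_closedBall_mul_measure_ball_le ε o (n * r) (by rwa [hε])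
    rwa [hε] at h
  have hfin : packingNumber ε (closedBall o (n * r)) ≠ ⊤ := fun htop => by
    rw [htop, ENat.toENNReal_top, ENNReal.top_mul hc₀, top_le_iff] at hpack
    exact ENNReal.ofReal_ne_top (top_le_iff.1 (hpack ▸ hpoly n hn))
  calc μ (U ^ n) ≤ μ (π ⁻¹' displacementBall o (n * r)) :=
        measure_mono (pow_preimage_displacementBall_subset π n)
    _ ≤ packingNumber ε (closedBall o (n * r)) * μ U := by
        have h := measure_preimage_displacementBall_le_packingNumber_mul π μ hfin
        rwa [h2ε] at h
    _ ≤ m (ball o (n * r + r / 4)) / c * μ U := by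
        gcongr
        exact (ENNReal.le_div_iff_mul_le (Or.inl hc₀) (Or.inl hc)).2 hpack
    _ = m (ball o (n * r + r / 4)) * (μ U / c) := by simp only [div_eq_mul_inv]; ring
    _ ≤ ENNReal.ofReal (C₁ * (n : ℝ) ^ Q') * ENNReal.ofReal (μ U / c).toReal :=
        mul_le_mul' (hpoly n hn) (ENNReal.ofReal_toReal (ENNReal.div_ne_top hU hc₀)).ge
    _ = ENNReal.ofReal (C₁ * (μ U / c).toReal * (n : ℝ) ^ Q') := by
        rw [← ENNReal.ofReal_mul' ENNReal.toReal_nonneg]; ring_nf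

end Growth

theorem hasPolynomialGrowth_of_forall_measure_pow_le {G : Type*} [Group G] [TopologicalSpace G]
    [IsTopologicalGroup G] [MeasurableSpace G] [BorelSpace G] {U : Set G}
    (hUc : IsCompact U) (hU1 : U ∈ 𝓝 1) (hgen : Subgroup.closure U = ⊤)
    (hgrowth : ∀ (μ : Measure G) [μ.IsMulLeftInvariant], μ U ≠ ⊤ →
      ∃ C Q : ℝ, ∀ n : ℕ, 0 < n → μ (U ^ n) ≤ ENNReal.ofReal (C * (n : ℝ) ^ Q)) :
    HasPolynomialGrowth G :=
  let K : TopologicalSpace.PositiveCompacts G :=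
    ⟨⟨U, hUc⟩, ⟨1, mem_interior_iff_mem_nhds.2 hU1⟩⟩
  ⟨Measure.haarMeasure K, U, inferInstance, hUc, hU1, hgen,
    hgrowth _ hUc.measure_lt_top.ne⟩

/-- if a homogeneous metric space has polynomial growth, then
its isometry group (with the topology of pointwise convergence) and the
identity component thereof have polynomial growth. -/
theorem statement19 (M : Type*) [MetricSpace M] [ConnectedSpace M] [LocallyCompactSpace M]
    [MeasurableSpace M] [BorelSpace M]
    (hhom : ∀ x y : M, ∃ f : M ≃ᵢ M, f x = y)
    (hgrowth : MetricPolynomialGrowth M) :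
    letI : TopologicalSpace (M ≃ᵢ M) := TopologicalSpace.induced (fun f : M ≃ᵢ M => (⇑f : M → M)) Pi.topologicalSpace
    letI : MeasurableSpace (M ≃ᵢ M) := borel (M ≃ᵢ M)
    HasPolynomialGrowth (M ≃ᵢ M) ∧
      ∃ H : Subgroup (M ≃ᵢ M), (H : Set (M ≃ᵢ M)) = connectedComponent (1 : M ≃ᵢ M) ∧
        (letI : MeasurableSpace H := borel H
         HasPolynomialGrowth H) := by
  borelize (M ≃ᵢ M)
  obtain ⟨m, hm₀, hm_cpt, hm_inv, C, Q, R₀, o, hgr⟩ := hgrowth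
  obtain ⟨ε, hε, hcomp⟩ := exists_pos_forall_isCompact_closedBall hhom
  obtain ⟨δ, hδ, rfl⟩ : ∃ δ, 0 < δ ∧ 2 * δ = ε := ⟨ε / 2, half_pos hε, by ring⟩
  have := sigmaCompactSpace_of_isCompact_closedBall hδ hcomp
  have hball := measure_ball_eq_of_transitive hm_inv hhom
  have hc₀ := (measure_ball_pos_of_forall_eq hm₀ (by positivity) (hball · · (δ / 4)) o).ne'
  have hc : m (ball o (δ / 4)) ≠ ⊤ := ne_top_of_le_ne_top (hm_cpt _ (hcomp o)).ne <|
    measure_mono (ball_subset_closedBall.trans (closedBall_subset_closedBall (by linarith)))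
  have hV1 : displacementBall o δ ∈ 𝓝 1 := displacementBall_mem_nhds_one hδ
  have hVc : IsCompact (displacementBall o δ) := isCompact_displacementBall hδ hcomp
  refine ⟨hasPolynomialGrowth_of_forall_measure_pow_le hVc hV1
    (closure_displacementBall_eq_top hhom hδ) fun μ _ hμ =>
      exists_measure_pow_preimage_displacementBall_le (MonoidHom.id _) μ m hδ
        (hball · · _) hc₀ hc hgr hμ, Subgroup.connectedComponentOfOne _, rfl, ?_⟩
  set H := Subgroup.connectedComponentOfOne (M ≃ᵢ M)
  borelize ↥H
  have : ConnectedSpace H := Subtype.connectedSpace isConnected_connectedComponent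
  have hU1 : H.subtype ⁻¹' displacementBall o δ ∈ 𝓝 1 :=
    continuous_subtype_val.continuousAt.preimage_mem_nhds hV1
  exact hasPolynomialGrowth_of_forall_measure_pow_le
    (isClosed_connectedComponent.isClosedEmbedding_subtypeVal.isCompact_preimage hVc) hU1
    (Subgroup.closure_eq_top_of_mem_nhds_one hU1) fun μ _ hμ =>
      exists_measure_pow_preimage_displacementBall_le H.subtype μ m hδ (hball · · _)
        hc₀ hc hgr hμ
end
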